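/- arXiv:2205.04331 — 2 statements merged into one kernel-verified Lean document; each statement's English description precedes it below -/
import Mathlib

section
/- In any ontological model for ℂⁿ, the map D is convex linear: for all ρ_a, ρ_b ∈ 𝒞 and s ∈ [0,1], D(s·ρ_a + (1−s)·ρ_b) = s·D(ρ_a) + (1−s)·D(ρ_b). -/
/-! The response functions are bounded and measurable, so `ρ ↦ ∫ p_A dρ` is affine; via the
Born rule this gives `tr(D(sρa + (1-s)ρb) A) = s tr(D ρa A) + (1-s) tr(D ρb A)` for every effect
`A`. A matrix `X` with `tr(X A) = 0` for all effects vanishes: for `‖ψ‖ ≤ 1` the projection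
`|ψ⟩⟨ψ|` is an effect and `tr(X |ψ⟩⟨ψ|) = ⟨ψ, X ψ⟩`, rescaling removes the norm bound, and over
`ℂ` the quadratic form `ψ ↦ ⟨ψ, X ψ⟩` determines `X`. -/

open MeasureTheory
open scoped NNReal ENNReal ComplexOrder

noncomputable section

/-- The rank-one projection `|ψ⟩⟨ψ|` associated with a vector `ψ ∈ ℂⁿ`. -/
def proj {n : ℕ} (ψ : EuclideanSpace ℂ (Fin n)) : Matrix (Fin n) (Fin n) ℂ :=
  Matrix.of fun i j => ψ i * (starRingEnd ℂ) (ψ j)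

/-- An ontological model for `ℂⁿ`: a measurable space `Λ` of ontic states, a convex set `C`
of preparable probability measures on `Λ`, measurable response functions `p A : Λ → [0,1]`
for each effect `A` (`0 ≤ A ≤ 1` in the Loewner order), and a map `D` from `C` onto the set
of density matrices reproducing the quantum statistics. -/
structure OntModel (n : ℕ) (Λ : Type*) [MeasurableSpace Λ] where
  C : Set (Measure Λ)
  prob : ∀ ρ ∈ C, IsProbabilityMeasure ρ
  convexC : ∀ ρa ∈ C, ∀ ρb ∈ C, ∀ s : ℝ≥0, s ≤ 1 → s • ρa + (1 - s) • ρb ∈ C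
  p : Matrix (Fin n) (Fin n) ℂ → Λ → ℝ
  p_meas : ∀ A, Measurable (p A)
  p_nonneg : ∀ A l, 0 ≤ p A l
  p_le_one : ∀ A l, p A l ≤ 1
  D : Measure Λ → Matrix (Fin n) (Fin n) ℂ
  D_psd : ∀ ρ ∈ C, (D ρ).PosSemidef
  D_trace : ∀ ρ ∈ C, (D ρ).trace = 1
  D_surj : ∀ W : Matrix (Fin n) (Fin n) ℂ, W.PosSemidef → W.trace = 1 → ∃ ρ ∈ C, D ρ = W
  agree : ∀ ρ ∈ C, ∀ A : Matrix (Fin n) (Fin n) ℂ, A.PosSemidef → (1 - A).PosSemidef →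
    ((∫ l, p A l ∂ρ : ℝ) : ℂ) = (D ρ * A).trace

namespace Matrix

variable {n : ℕ}

lemma proj_eq_vecMulVec (ψ : EuclideanSpace ℂ (Fin n)) :
    proj ψ = vecMulVec (ψ : Fin n → ℂ) (star ψ) := rfl

lemma posSemidef_proj (ψ : EuclideanSpace ℂ (Fin n)) : (proj ψ).PosSemidef :=
  posSemidef_vecMulVec_self_star _

lemma star_dotProduct_proj_mulVec (ψ x : EuclideanSpace ℂ (Fin n)) :
    star (x : Fin n → ℂ) ⬝ᵥ proj ψ *ᵥ x = ((‖inner ℂ ψ x‖ ^ 2 : ℝ) : ℂ) := by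
  have h : inner ℂ ψ x = star (ψ : Fin n → ℂ) ⬝ᵥ x := dotProduct_comm _ _
  rw [proj_eq_vecMulVec, vecMulVec_mulVec, dotProduct_smul, op_smul_eq_mul, Complex.ofReal_pow,
    ← Complex.mul_conj', h, Complex.star_def.symm, star_dotProduct, mul_comm]

lemma posSemidef_one_sub_proj {ψ : EuclideanSpace ℂ (Fin n)} (hψ : ‖ψ‖ ≤ 1) :
    (1 - proj ψ).PosSemidef := by
  refine posSemidef_iff_dotProduct_mulVec.mpr ⟨isHermitian_one.sub (posSemidef_proj ψ).1, ?_⟩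
  intro x
  set y : EuclideanSpace ℂ (Fin n) := WithLp.toLp 2 x
  have hy : star x ⬝ᵥ x = ((‖y‖ ^ 2 : ℝ) : ℂ) := by
    have := inner_self_eq_norm_sq_to_K (𝕜 := ℂ) y
    exact_mod_cast (dotProduct_comm _ _).trans this
  have hCS : ‖inner ℂ ψ y‖ ^ 2 ≤ ‖y‖ ^ 2 := by
    gcongr
    calc ‖inner ℂ ψ y‖ ≤ ‖ψ‖ * ‖y‖ := norm_inner_le_norm ψ y
      _ ≤ ‖y‖ := mul_le_of_le_one_left (norm_nonneg y) hψ
  rw [sub_mulVec, one_mulVec, dotProduct_sub, hy, star_dotProduct_proj_mulVec ψ y, sub_nonneg]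
  exact_mod_cast hCS

lemma proj_smul (c : ℂ) (ψ : EuclideanSpace ℂ (Fin n)) :
    proj (c • ψ) = (c * star c) • proj ψ := by
  ext i j
  simp only [proj, of_apply, smul_apply, PiLp.smul_apply, smul_eq_mul, map_mul,
    Complex.star_def]
  ring

lemma trace_mul_proj (X : Matrix (Fin n) (Fin n) ℂ) (ψ : EuclideanSpace ℂ (Fin n)) :
    (X * proj ψ).trace = inner ℂ ψ (toEuclideanLin X ψ) := by
  rw [proj_eq_vecMulVec, mul_vecMulVec, trace_vecMulVec]
  rfl

lemma eq_zero_of_forall_trace_mul_proj_eq_zero {X : Matrix (Fin n) (Fin n) ℂ}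
    (h : ∀ ψ : EuclideanSpace ℂ (Fin n), ‖ψ‖ ≤ 1 → (X * proj ψ).trace = 0) : X = 0 := by
  have hψ : ∀ ψ : EuclideanSpace ℂ (Fin n), (X * proj ψ).trace = 0 := by
    intro ψ
    set t : ℝ := (‖ψ‖ + 1)⁻¹
    have ht : 0 < t := by positivity
    have hnorm : ‖(t : ℂ) • ψ‖ ≤ 1 := by
      rw [norm_smul, Complex.norm_real, Real.norm_of_nonneg ht.le, inv_mul_le_one₀ (by positivity)]
      linarith
    have := h _ hnorm
    rw [proj_smul, mul_smul_comm, trace_smul, smul_eq_mul] at this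
    exact (mul_eq_zero.mp this).resolve_left (by simp [ht.ne'])
  have hT : toEuclideanLin X = 0 := by
    refine (inner_map_self_eq_zero _).mp fun ψ => ?_
    rw [← inner_conj_symm, ← trace_mul_proj, hψ, map_zero]
  exact toEuclideanLin.map_eq_zero_iff.mp hT

lemma eq_zero_of_forall_trace_mul_effect_eq_zero {X : Matrix (Fin n) (Fin n) ℂ}
    (h : ∀ A : Matrix (Fin n) (Fin n) ℂ, A.PosSemidef → (1 - A).PosSemidef → (X * A).trace = 0) :
    X = 0 :=
  eq_zero_of_forall_trace_mul_proj_eq_zero fun ψ hψ =>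
    h _ (posSemidef_proj ψ) (posSemidef_one_sub_proj hψ)

end Matrix

lemma MeasureTheory.integral_smul_add_smul_measure {α G : Type*} [MeasurableSpace α]
    [NormedAddCommGroup G] [NormedSpace ℝ G] {μ ν : Measure α} {f : α → G}
    (hμ : Integrable f μ) (hν : Integrable f ν) (s t : ℝ≥0) :
    ∫ x, f x ∂(s • μ + t • ν) = s • ∫ x, f x ∂μ + t • ∫ x, f x ∂ν := by
  rw [integral_add_measure hμ.smul_measure_nnreal hν.smul_measure_nnreal,
    integral_smul_nnreal_measure, integral_smul_nnreal_measure]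

lemma OntModel.integrable_p {n : ℕ} {Λ : Type*} [MeasurableSpace Λ] (M : OntModel n Λ)
    {ρ : Measure Λ} (hρ : ρ ∈ M.C) (A : Matrix (Fin n) (Fin n) ℂ) : Integrable (M.p A) ρ :=
  have := M.prob ρ hρ
  .of_bound (M.p_meas A).aestronglyMeasurable 1 <| .of_forall fun l => by
    rw [Real.norm_of_nonneg (M.p_nonneg A l)]
    exact M.p_le_one A l

/-- In any ontological model for `ℂⁿ`, the map `D` is convex linear. -/
theorem D_convex_linear {n : ℕ} {Λ : Type*} [MeasurableSpace Λ] (M : OntModel n Λ)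
    (ρa ρb : Measure Λ) (ha : ρa ∈ M.C) (hb : ρb ∈ M.C) (s : ℝ≥0) (hs : s ≤ 1) :
    M.D (s • ρa + (1 - s) • ρb)
      = ((s : ℝ) : ℂ) • M.D ρa + (((1 - s : ℝ≥0) : ℝ) : ℂ) • M.D ρb := by
  have hmix : s • ρa + (1 - s) • ρb ∈ M.C := M.convexC ρa ha ρb hb s hs
  refine sub_eq_zero.mp (Matrix.eq_zero_of_forall_trace_mul_effect_eq_zero fun A hA hA' => ?_)
  have hint := integral_smul_add_smul_measure (f := M.p A) (M.integrable_p ha A)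
    (M.integrable_p hb A) s (1 - s)
  rw [Matrix.sub_mul, Matrix.add_mul, Matrix.smul_mul, Matrix.smul_mul, Matrix.trace_sub,
    Matrix.trace_add, Matrix.trace_smul, Matrix.trace_smul, ← M.agree _ hmix A hA hA',
    ← M.agree ρa ha A hA hA', ← M.agree ρb hb A hA hA', hint, sub_eq_zero]
  simp only [NNReal.smul_def, smul_eq_mul, Complex.ofReal_add, Complex.ofReal_mul]

end
end

section
/- There is no measure space (Λ, 𝓕, μ) with μ(Λ) = 2 together with a family of measurable sets A_ψ ⊆ Λ, indexed by the unit vectors ψ ∈ ℂ², such that μ(A_ψ ∩ A_φ) = |⟨ψ, φ⟩|² (= tr(P_ψ·P_φ)) for all unit vectors ψ, φ ∈ ℂ². -/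
open MeasureTheory

noncomputable section

universe u

/-!
Taking `ψ = φ` shows that every `A_ψ` has measure `‖ψ‖⁴ = 1`. For three unit vectors `u, v, w`,
the Bonferroni inequality `μ A + μ B + μ C ≤ μ (A ∪ B ∪ C) + Σ μ (pairwise intersections)` then
gives `3 ≤ 2 + |⟨u,v⟩|² + |⟨u,w⟩|² + |⟨v,w⟩|²`. But `(1, 0)`, `(3/5, 4/5)`, `(3/5, -4/5)` have
squared overlaps `9/25 + 9/25 + 49/625 < 1`.
-/

theorem measure_add_add_le_measure_union_add_inter {α : Type*} [MeasurableSpace α]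
    (μ : Measure α) (A : Set α) {B C : Set α} (hB : MeasurableSet B) (hC : MeasurableSet C) :
    μ A + μ B + μ C ≤ μ (A ∪ B ∪ C) + (μ (A ∩ B) + μ (A ∩ C) + μ (B ∩ C)) :=
  calc μ A + μ B + μ C
      = μ (A ∪ B ∪ C) + μ ((A ∪ B) ∩ C) + μ (A ∩ B) := by
        rw [measure_union_add_inter _ hC, ← measure_union_add_inter A hB]; ring
    _ ≤ μ (A ∪ B ∪ C) + (μ (A ∩ C) + μ (B ∩ C)) + μ (A ∩ B) := by
        gcongr; rw [Set.union_inter_distrib_right]; exact measure_union_le _ _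
    _ = μ (A ∪ B ∪ C) + (μ (A ∩ B) + μ (A ∩ C) + μ (B ∩ C)) := by ring

theorem exists_three_unit_vectors_sum_norm_inner_sq_lt_one :
    ∃ u v w : EuclideanSpace ℂ (Fin 2), ‖u‖ = 1 ∧ ‖v‖ = 1 ∧ ‖w‖ = 1 ∧
      ‖(inner ℂ u v : ℂ)‖ ^ 2 + ‖(inner ℂ u w : ℂ)‖ ^ 2 + ‖(inner ℂ v w : ℂ)‖ ^ 2 < 1 := by
  refine ⟨!₂[1, 0], !₂[3 / 5, 4 / 5], !₂[3 / 5, -4 / 5], ?_, ?_, ?_, ?_⟩ <;>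
    simp [EuclideanSpace.norm_eq, PiLp.inner_apply, Fin.sum_univ_two, map_ofNat] <;> norm_num

/-- There is no measure space `(Λ, 𝓕, μ)` of total mass 2 together with measurable sets
`A_ψ ⊆ Λ`, indexed by the unit vectors `ψ ∈ ℂ²`, with
`μ(A_ψ ∩ A_φ) = |⟨ψ, φ⟩|² (= tr(P_ψ P_φ))` for all unit vectors `ψ, φ`. -/
theorem no_overlap_family :
    ¬ ∃ (Λ : Type u) (_ : MeasurableSpace Λ) (μ : Measure Λ)
        (A : EuclideanSpace ℂ (Fin 2) → Set Λ),
      μ Set.univ = 2 ∧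
      (∀ ψ : EuclideanSpace ℂ (Fin 2), ‖ψ‖ = 1 → MeasurableSet (A ψ)) ∧
      (∀ ψ φ : EuclideanSpace ℂ (Fin 2), ‖ψ‖ = 1 → ‖φ‖ = 1 →
        μ (A ψ ∩ A φ) = ENNReal.ofReal (‖(inner ℂ ψ φ : ℂ)‖ ^ 2)) := by
  rintro ⟨Λ, _, μ, A, hμ, hmeas, hover⟩
  obtain ⟨u, v, w, hu, hv, hw, hlt⟩ := exists_three_unit_vectors_sum_norm_inner_sq_lt_one
  have hunit : ∀ ψ, ‖ψ‖ = 1 → μ (A ψ) = 1 := fun ψ hψ => by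
    rw [← Set.inter_self (A ψ), hover ψ ψ hψ hψ, inner_self_eq_norm_sq_to_K, hψ]
    simp
  have hunion : μ (A u ∪ A v ∪ A w) ≤ 2 := hμ ▸ measure_mono (Set.subset_univ _)
  have hoverlaps : μ (A u ∩ A v) + μ (A u ∩ A w) + μ (A v ∩ A w) < 1 := by
    rw [hover u v hu hv, hover u w hu hw, hover v w hv hw,
      ← ENNReal.ofReal_add (by positivity) (by positivity),
      ← ENNReal.ofReal_add (by positivity) (by positivity), ENNReal.ofReal_lt_one]
    exact hlt
  have : (3 : ENNReal) < 3 := calc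
    3 = μ (A u) + μ (A v) + μ (A w) := by rw [hunit u hu, hunit v hv, hunit w hw]; norm_num
    _ ≤ μ (A u ∪ A v ∪ A w) + (μ (A u ∩ A v) + μ (A u ∩ A w) + μ (A v ∩ A w)) :=
        measure_add_add_le_measure_union_add_inter μ (A u) (hmeas v hv) (hmeas w hw)
    _ < 2 + 1 :=
        ENNReal.add_lt_add_of_le_of_lt (ne_top_of_le_ne_top (by simp) hunion) hunion hoverlaps
    _ = 3 := by norm_num
  exact lt_irrefl _ this
end
end
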